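/- For every countable ordinal α ≥ 2, the ideal conv_α is not a P⁻ ideal. -/

import Mathlib

open Set Filter Topology Ordinal

noncomputable section

/-- The derived set of `A`: the set of accumulation (limit) points of `A`. -/
def derivSet {X : Type*} [TopologicalSpace X] (A : Set X) : Set X :=
  {p | p ∈ closure (A \ {p})}

/-- The ordinal space `ω^a + 1 = [0, ω^a]` with the (order) topology. -/
abbrev OrdSpace (a : Ordinal) : Type _ := ↥(Set.Iic (omega0 ^ a))

/-- The ideal `conv_a` on `ω^a + 1`: sets with finite derived set. -/
def convIdeal (a : Ordinal) : Set (Set (OrdSpace a)) :=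
  {A | (derivSet A).Finite}

/-- `I` is an ideal of subsets. -/
structure IsIdeal {S : Type*} (I : Set (Set S)) : Prop where
  empty_mem : ∅ ∈ I
  subset_mem : ∀ {A B : Set S}, A ⊆ B → B ∈ I → A ∈ I
  union_mem : ∀ {A B : Set S}, A ∈ I → B ∈ I → A ∪ B ∈ I

/-- The subsequence of `f` indexed by `A` converges to `x`. -/
def ConvAlong {X : Type*} [TopologicalSpace X] (f : ℕ → X) (A : Set ℕ) (x : X) : Prop :=
  ∀ U ∈ nhds x, {n ∈ A | f n ∉ U}.Finite

/-- Katětov order: `J ≤_K I`, where `I` lives on `X` and `J` on `Y`. -/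
def KatetovLE {X Y : Type*} (J : Set (Set Y)) (I : Set (Set X)) : Prop :=
  ∃ f : X → Y, ∀ A ∈ J, f ⁻¹' A ∈ I

/-- `X ∈ FinBW(I)`: every sequence in `X` has a convergent subsequence indexed
by an `I`-positive set. -/
def InFinBW (I : Set (Set ℕ)) (X : Type*) [TopologicalSpace X] : Prop :=
  ∀ f : ℕ → X, ∃ A : Set ℕ, A ∉ I ∧ ∃ x : X, ConvAlong f A x

/-- The property `P⁻` for an ideal. -/
def PMinus {S : Type*} (I : Set (Set S)) : Prop :=
  ∀ C : Set S, C ∉ I →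
    ∀ P : Set (Set S), (∀ A ∈ P, A ∈ I) → ⋃₀ P = C →
      (∀ A ∈ P, ∀ B ∈ P, A ≠ B → Disjoint A B) →
      ∃ B ⊆ C, B ∉ I ∧ ∀ A ∈ P, (B ∩ A).Finite

/-!
Inside `ω ^ α + 1 ⊇ ω ^ 2 + 1`, let `C = [0, ω²)` and cut it into the blocks
`{x | x / ω = k} = [ω·k, ω·(k+1))`, `k ∈ ℕ`. A block accumulates only at `ω·(k+1)`, so it lies in
`conv_α`, whereas `C` accumulates at every `ω·(k+1)` and is `conv_α`-positive. A set `B ⊆ C` that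
meets every block finitely meets every `[0, ω·n)` finitely, so `ω²` is its only possible
accumulation point and `B ∈ conv_α`: the partition has no positive selector.
-/

open Order Function

theorem not_pMinus_of_iUnion_eq {S ι : Type*} {I : Set (Set S)} {C : Set S} (D : ι → Set S)
    (hC : C ∉ I) (hD : ∀ k, D k ∈ I) (hDC : ⋃ k, D k = C) (hdisj : Pairwise (Disjoint on D))
    (hsel : ∀ B ⊆ C, (∀ k, (B ∩ D k).Finite) → B ∈ I) : ¬ PMinus I := by
  intro hP
  obtain ⟨B, hBC, hBI, hfin⟩ := hP C hC (range D) (forall_mem_range.2 hD) (sUnion_range D ▸ hDC)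
    (by rintro _ ⟨j, rfl⟩ _ ⟨k, rfl⟩ hjk; exact hdisj (ne_of_apply_ne D hjk))
  exact hBI (hsel B hBC fun k => hfin _ (mem_range_self k))

section DerivedSet

variable {X Y : Type*} [TopologicalSpace X] [TopologicalSpace Y]

theorem derivSet_eq_derivedSet (A : Set X) : derivSet A = derivedSet A := by
  ext p
  exact mem_closure_iff_clusterPt.trans accPt_principal_iff_clusterPt.symm

theorem Topology.IsEmbedding.derivSet_eq_preimage {f : X → Y} (hf : IsEmbedding f) (A : Set X) :
    derivSet A = f ⁻¹' derivSet (f '' A) := by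
  ext p
  simp only [derivSet, mem_ofPred_eq, mem_preimage, hf.isInducing.closure_eq_preimage_closure_image,
    image_sdiff hf.injective, image_singleton]

end DerivedSet

theorem Order.IsSuccLimit.mem_derivedSet_Iio {α : Type*} [LinearOrder α] [TopologicalSpace α]
    [OrderTopology α] [SuccOrder α] [NoMaxOrder α] {p : α} (hp : IsSuccLimit p) :
    p ∈ derivedSet (Iio p) :=
  SuccOrder.accPt_principal.2
    ⟨hp.not_isMin, fun b hb => ⟨succ b, hp.succ_lt hb, lt_succ b, hp.succ_lt hb⟩⟩

namespace Ordinal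

theorem omega0_mul_succ_le_of_isSuccLimit {o p : Ordinal} (hp : IsSuccLimit p) (h : ω * o < p) :
    ω * succ o ≤ p := by
  obtain ⟨m, rfl⟩ := isSuccPrelimit_iff_omega0_dvd.1 hp.isSuccPrelimit
  exact mul_le_mul_right (succ_le_of_lt ((mul_lt_mul_iff_right₀ omega0_pos).1 h)) ω

theorem div_omega0_eq_iff {x o : Ordinal} : x / ω = o ↔ ω * o ≤ x ∧ x < ω * succ o := by
  rw [le_antisymm_iff, ← lt_succ_iff, ← lt_mul_iff_div_lt omega0_ne_zero,
    ← mul_le_iff_le_div omega0_ne_zero, and_comm]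

theorem derivedSet_div_omega0_eq_subset (o : Ordinal) :
    derivedSet {x | x / ω = o} ⊆ {ω * succ o} := by
  intro p hp
  have hlim := AccPt.isSuccLimit hp
  obtain ⟨-, hnear⟩ := SuccOrder.accPt_principal.1 hp
  obtain ⟨x, hx, -, hxp⟩ := hnear 0 hlim.bot_lt
  refine le_antisymm (not_lt.1 fun hgt => ?_) (omega0_mul_succ_le_of_isSuccLimit hlim ?_)
  · obtain ⟨y, hy, hgty, -⟩ := hnear _ hgt
    exact (div_omega0_eq_iff.1 hy).2.not_gt hgty
  · exact (div_omega0_eq_iff.1 hx).1.trans_lt hxp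

theorem derivedSet_subset_of_finite_inter_div_omega0 {B : Set Ordinal} (hB : B ⊆ Iio (ω * ω))
    (hfin : ∀ k : ℕ, (B ∩ {x | x / ω = k}).Finite) : derivedSet B ⊆ {ω * ω} := by
  intro p hp
  have hle : p ≤ ω * ω :=
    closure_minimal (hB.trans Iio_subset_Iic_self) isClosed_Iic (derivedSet_subset_closure B hp)
  refine hle.antisymm (not_lt.1 fun hlt => ?_)
  obtain ⟨n, hn⟩ := lt_omega0.1 ((lt_mul_iff_div_lt omega0_ne_zero).1 hlt)
  have hbelow : Iio (ω * succ (p / ω)) ∩ B ⊆ ⋃ k ∈ Iic n, B ∩ {x | x / ω = k} := by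
    rintro x ⟨hx, hxB⟩
    have hxn : x / ω ≤ n := by
      rw [← hn, ← lt_succ_iff, ← lt_mul_iff_div_lt omega0_ne_zero]
      exact hx
    obtain ⟨k, hk⟩ := lt_omega0.1 (hxn.trans_lt (natCast_lt_omega0 n))
    exact mem_biUnion (show k ∈ Iic n by exact_mod_cast hk ▸ hxn) ⟨hxB, hk⟩
  exact (((finite_Iic n).biUnion fun k _ => hfin k).subset hbelow).not_infinite
    (Set.Infinite.of_accPt (hp.nhds_inter (Iio_mem_nhds (lt_mul_succ_div p omega0_ne_zero))))

end Ordinal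

theorem OrdSpace.derivSet_eq_preimage {a : Ordinal} (A : Set (OrdSpace a)) :
    derivSet A = Subtype.val ⁻¹' derivedSet (Subtype.val '' A) := by
  rw [IsEmbedding.subtypeVal.derivSet_eq_preimage, derivSet_eq_derivedSet]

theorem mem_convIdeal_of_finite_derivedSet {a : Ordinal} {A : Set (OrdSpace a)}
    (h : (derivedSet (Subtype.val '' A)).Finite) : A ∈ convIdeal a := by
  rw [convIdeal, mem_ofPred_eq, OrdSpace.derivSet_eq_preimage]
  exact h.preimage Subtype.val_injective.injOn

theorem setOf_lt_omega0_mul_omega0_notMem_convIdeal {a : Ordinal} (ha : ω * ω ≤ ω ^ a) :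
    {x : OrdSpace a | (x : Ordinal) < ω * ω} ∉ convIdeal a := by
  have hlt (n : ℕ) : ω * succ (n : Ordinal) < ω * ω :=
    (mul_lt_mul_iff_right₀ omega0_pos).2 (isSuccLimit_omega0.succ_lt (natCast_lt_omega0 n))
  let pt (n : ℕ) : OrdSpace a := ⟨ω * succ (n : Ordinal), (hlt n).le.trans ha⟩
  have hpt : StrictMono pt := fun m n h =>
    (mul_lt_mul_iff_right₀ omega0_pos).2 (succ_lt_succ (by exact_mod_cast h))
  refine infinite_of_injective_forall_mem hpt.injective fun n => ?_
  rw [OrdSpace.derivSet_eq_preimage, mem_preimage]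
  refine derivedSet_mono _ _ (fun y hy => ?_)
    (isSuccLimit_mul_left isSuccLimit_omega0 (zero_le.trans_lt (lt_succ _))).mem_derivedSet_Iio
  exact ⟨⟨y, (hy.trans (hlt n)).le.trans ha⟩, hy.trans (hlt n), rfl⟩

theorem stmt17_general (a : Ordinal) (ha : 2 ≤ a) :
    ¬ PMinus (convIdeal a) := by
  have hsq : ω * ω ≤ ω ^ a :=
    calc ω * ω = ω ^ (2 : Ordinal) := by rw [← Nat.cast_ofNat, opow_natCast, sq]
      _ ≤ ω ^ a := opow_le_opow_right omega0_pos ha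
  refine not_pMinus_of_iUnion_eq (fun k : ℕ => {x : OrdSpace a | (x : Ordinal) / ω = k})
    (setOf_lt_omega0_mul_omega0_notMem_convIdeal hsq) (fun k => ?_) ?_ ?_ fun B hBC hfin => ?_
  · exact mem_convIdeal_of_finite_derivedSet ((finite_singleton _).subset
      ((derivedSet_mono _ _ (image_preimage_subset _ _)).trans (derivedSet_div_omega0_eq_subset k)))
  · ext x
    simp only [mem_iUnion, mem_ofPred_eq, lt_mul_iff_div_lt omega0_ne_zero, lt_omega0]
  · exact fun j k hjk => disjoint_left.2 fun x hj hk => hjk (by exact_mod_cast hj.symm.trans hk)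
  · refine mem_convIdeal_of_finite_derivedSet ((finite_singleton _).subset
      (derivedSet_subset_of_finite_inter_div_omega0 (image_subset_iff.2 hBC) fun k => ?_))
    exact image_inter_preimage _ _ _ ▸ (hfin k).image _

/-- `conv_α` is not a `P⁻` ideal for any countable `α ≥ 2`. -/
theorem stmt17 (a : Ordinal) (ha : 2 ≤ a) (hac : a.card ≤ Cardinal.aleph0) :
    ¬ PMinus (convIdeal a) :=
  stmt17_general a ha
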